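/- arXiv:2510.11476 — 5 statements merged into one kernel-verified Lean document; each statement's English description precedes it below -/
import Mathlib

section
/- Let T ≥ 1 and 0 ≤ K < T be integers, let ℓ̂ : {1,...,T} → ℝ satisfy 0 < ℓ̂(t) ≤ 1 for all t, let C^res : {1,...,T} → ℝ, and set C(t) = C^res(t)/ℓ̂(t). Consider the supremum of C over all pairs (C, u) with C ∈ ℝ and u : {1,...,T} → ℝ such that u(t) ≤ 0 for all t, u has at most K nonzero entries, and C·ℓ̂(t) + u(t) ≤ C^res(t) for all t. This supremum is attained and equals C[K+1], the (K+1)-th lower order statistic of the values C(1),...,C(T). -/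
/-- Proposition 1, optimal value.
Curtailment-flexibility hosting capacity analysis on a copperplate network:
with `T ≥ 1` time slots (indexed by `Fin T`), intervention budget `K < T`,
normalized new-load profile `lhat` with `0 < lhat t ≤ 1`, dynamic residual
capacity `Cres`, and dynamic hosting capacity `C t = Cres t / lhat t`
sorted nondecreasingly by the permutation `σ`, the supremum of the capacity
`c` over all feasible pairs `(c, u)` — where `u ≤ 0` has at most `K` nonzero
entries and `c * lhat t + u t ≤ Cres t` for all `t` — is attained and equals
the `(K+1)`-th lower order statistic `C[K+1] = C (σ ⟨K, _⟩)`. -/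
theorem stmt_0 (T : ℕ) (hT : 1 ≤ T) (K : ℕ) (hK : K < T)
    (lhat Cres : Fin T → ℝ)
    (hlhat : ∀ t, 0 < lhat t ∧ lhat t ≤ 1)
    (C : Fin T → ℝ) (hC : ∀ t, C t = Cres t / lhat t)
    (σ : Equiv.Perm (Fin T))
    (hσ : ∀ i j : Fin T, i ≤ j → C (σ i) ≤ C (σ j)) :
    IsGreatest
      {c : ℝ | ∃ u : Fin T → ℝ,
        (∀ t, u t ≤ 0) ∧
        ({t : Fin T | u t ≠ 0}.ncard ≤ K) ∧
        (∀ t, c * lhat t + u t ≤ Cres t)}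
      (C (σ ⟨K, hK⟩)) := by
  constructor
  · refine ⟨fun t => min (Cres t - C (σ ⟨K, hK⟩) * lhat t) 0,
      fun t => min_le_right _ _, ?_, ?_⟩
    · have hsub : {t : Fin T | min (Cres t - C (σ ⟨K, hK⟩) * lhat t) 0 ≠ 0} ⊆
          ↑((Finset.Iio (⟨K, hK⟩ : Fin T)).image σ) := by
        intro t ht
        simp only [Set.mem_setOf_eq] at ht
        have h1 : Cres t - C (σ ⟨K, hK⟩) * lhat t < 0 := by
          by_contra h; push_neg at h
          exact ht (min_eq_right h)
        have hl := (hlhat t).1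
        have hCt : C t < C (σ ⟨K, hK⟩) := by
          rw [hC, div_lt_iff₀ hl]; linarith
        have hlt : (σ.symm t) < (⟨K, hK⟩ : Fin T) := by
          by_contra h; push_neg at h
          have := hσ _ _ h
          rw [Equiv.apply_symm_apply] at this
          linarith
        simp only [Finset.coe_image, Set.mem_image, Finset.mem_coe, Finset.mem_Iio]
        exact ⟨σ.symm t, hlt, Equiv.apply_symm_apply σ t⟩
      calc {t : Fin T | min (Cres t - C (σ ⟨K, hK⟩) * lhat t) 0 ≠ 0}.ncard
          ≤ ((Finset.Iio (⟨K, hK⟩ : Fin T)).image σ : Finset (Fin T)).card := by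
            rw [← Set.ncard_coe_finset]
            exact Set.ncard_le_ncard hsub (Finset.finite_toSet _)
        _ ≤ (Finset.Iio (⟨K, hK⟩ : Fin T)).card := Finset.card_image_le
        _ = K := by rw [Fin.card_Iio]
    · intro t
      have := min_le_left (Cres t - C (σ ⟨K, hK⟩) * lhat t) 0
      linarith
  · rintro c ⟨u, hu0, hcard, hfeas⟩
    have hex : ∃ i : Fin T, i ≤ ⟨K, hK⟩ ∧ u (σ i) = 0 := by
      by_contra h
      push_neg at h
      have hsub : ((Finset.Iic (⟨K, hK⟩ : Fin T)).image σ : Set (Fin T)) ⊆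
          {t | u t ≠ 0} := by
        intro t ht
        simp only [Finset.coe_image, Set.mem_image, Finset.mem_coe, Finset.mem_Iic] at ht
        obtain ⟨i, hi, rfl⟩ := ht
        exact h i hi
      have h1 : ((Finset.Iic (⟨K, hK⟩ : Fin T)).image σ).card ≤ K := by
        rw [← Set.ncard_coe_finset]
        exact le_trans (Set.ncard_le_ncard hsub (Set.toFinite _)) hcard
      have h2 : ((Finset.Iic (⟨K, hK⟩ : Fin T)).image σ).card = K + 1 := by
        rw [Finset.card_image_of_injective _ σ.injective, Fin.card_Iic]
      omega
    obtain ⟨i, hi, hui⟩ := hex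
    have hf := hfeas (σ i)
    rw [hui] at hf
    have hl := (hlhat (σ i)).1
    have h1 : c ≤ C (σ i) := by rw [hC, le_div_iff₀ hl]; linarith
    exact le_trans h1 (hσ i ⟨K, hK⟩ hi)
end

section
/- Let T ≥ 1 and 0 ≤ K < T be integers, let ℓ̂ : {1,...,T} → ℝ satisfy 0 < ℓ̂(t) ≤ 1 for all t, let C^res : {1,...,T} → ℝ, set C(t) = C^res(t)/ℓ̂(t), and let σ be a permutation of {1,...,T} with C(σ(1)) ≤ ... ≤ C(σ(T)), writing t_s = σ(s) and C[s] = C(t_s). Define u* : {1,...,T} → ℝ by u*(t_s) = C^res(t_s) − C[K+1]·ℓ̂(t_s) for s = 1,...,K and u*(t) = 0 for all other t. Then u*(t) ≤ 0 for all t, u* has at most K nonzero entries, and C[K+1]·ℓ̂(t) + u*(t) ≤ C^res(t) for all t ∈ {1,...,T}; in particular the pair (C[K+1], u*) is feasible and hence optimal for the curtailment-flexibility hosting capacity problem. -/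
open Classical in
/-- Proposition 1, optimal load modification.
With the dynamic hosting capacities `C t = Cres t / lhat t` sorted
nondecreasingly by the permutation `σ` (so `t_s = σ s` and `C[s] = C (t_s)`),
the load modification `u*` that curtails at the `K` most critical slots,
`u* (t_s) = Cres (t_s) - C[K+1] * lhat (t_s)` for `s = 1, …, K` (0-indexed:
`s < K`) and `u* t = 0` otherwise, satisfies: `u* ≤ 0`, `u*` has at most `K`
nonzero entries, and `C[K+1] * lhat t + u* t ≤ Cres t` for all `t`; i.e., the
pair `(C[K+1], u*)` is feasible (hence optimal) for the curtailment-flexibility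
hosting capacity problem. -/
theorem stmt_1 (T : ℕ) (hT : 1 ≤ T) (K : ℕ) (hK : K < T)
    (lhat Cres : Fin T → ℝ)
    (hlhat : ∀ t, 0 < lhat t ∧ lhat t ≤ 1)
    (C : Fin T → ℝ) (hC : ∀ t, C t = Cres t / lhat t)
    (σ : Equiv.Perm (Fin T))
    (hσ : ∀ i j : Fin T, i ≤ j → C (σ i) ≤ C (σ j))
    (ustar : Fin T → ℝ)
    (hustar : ∀ t : Fin T,
      ustar t = if ∃ s : Fin T, (s : ℕ) < K ∧ σ s = t
        then Cres t - C (σ ⟨K, hK⟩) * lhat t else 0) :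
    (∀ t, ustar t ≤ 0) ∧
    ({t : Fin T | ustar t ≠ 0}.ncard ≤ K) ∧
    (∀ t, C (σ ⟨K, hK⟩) * lhat t + ustar t ≤ Cres t) := by

  -- key: if t is hit by some s < K, then C t ≤ C (σ ⟨K, hK⟩)
  have key : ∀ t : Fin T, (∃ s : Fin T, (s : ℕ) < K ∧ σ s = t) →
      C t ≤ C (σ ⟨K, hK⟩) := by
    rintro t ⟨s, hs, rfl⟩
    exact hσ s ⟨K, hK⟩ (le_of_lt hs)
  have hle : ∀ t : Fin T, C t ≤ C (σ ⟨K, hK⟩) → Cres t ≤ C (σ ⟨K, hK⟩) * lhat t := by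
    intro t h
    have hpos := (hlhat t).1
    rw [hC t, div_le_iff₀ hpos] at h
    exact h
  refine ⟨?_, ?_, ?_⟩
  · intro t
    rw [hustar t]
    split_ifs with h
    · have := hle t (key t h)
      linarith
    · exact le_refl 0
  · have hsub : {t : Fin T | ustar t ≠ 0} ⊆ σ '' {s : Fin T | (s : ℕ) < K} := by
      intro t ht
      simp only [Set.mem_setOf_eq, hustar t] at ht
      by_cases h : ∃ s : Fin T, (s : ℕ) < K ∧ σ s = t
      · obtain ⟨s, hs, hst⟩ := h
        exact ⟨s, hs, hst⟩
      · simp [h] at ht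
    calc {t : Fin T | ustar t ≠ 0}.ncard
        ≤ (σ '' {s : Fin T | (s : ℕ) < K}).ncard :=
          Set.ncard_le_ncard hsub ((Set.toFinite _).image _)
      _ ≤ {s : Fin T | (s : ℕ) < K}.ncard := Set.ncard_image_le (Set.toFinite _)
      _ ≤ K := by
          have : {s : Fin T | (s : ℕ) < K} = Set.range (Fin.castLE hK.le) := by
            ext s
            constructor
            · intro hs
              exact ⟨⟨s, hs⟩, rfl⟩
            · rintro ⟨a, rfl⟩
              exact a.isLt
          rw [this]
          have := Nat.card_coe_set_eq (Set.range (Fin.castLE hK.le))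
          rw [Set.ncard_eq_toFinset_card']
          have : (Set.range (Fin.castLE hK.le)).toFinset.card = K := by
            rw [Set.toFinset_range, Finset.card_image_of_injective _ (Fin.castLE_injective _)]
            simp
          omega
  · intro t
    rw [hustar t]
    split_ifs with h
    · linarith [hle t (key t h)]
    · have : (K : ℕ) ≤ ((σ.symm t : Fin T) : ℕ) := by
        by_contra hlt
        push_neg at hlt
        exact h ⟨σ.symm t, hlt, σ.apply_symm_apply t⟩
      have hCt : C (σ ⟨K, hK⟩) ≤ C t := by
        have := hσ ⟨K, hK⟩ (σ.symm t) this
        rwa [σ.apply_symm_apply] at this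
      have hpos := (hlhat t).1
      rw [hC t, le_div_iff₀ hpos] at hCt
      linarith
end

section
/- Let T ≥ 1 and 0 ≤ K < T be integers, let ℓ̂ : {1,...,T} → ℝ satisfy 0 < ℓ̂(t) ≤ 1 for all t, let C^res : {1,...,T} → ℝ, and set C(t) = C^res(t)/ℓ̂(t). Suppose u : {1,...,T} → ℝ is such that the number of indices t with u(t) < 0 is at most K (u may be positive elsewhere), and C ∈ ℝ satisfies C·ℓ̂(t) + u(t) ≤ C^res(t) for all t. Then C ≤ C[K+1], the (K+1)-th lower order statistic of C(1),...,C(T). In particular, the hosting capacity unlocked by delay flexibility with budget K and any delay window length D is at most the hosting capacity C*_K unlocked by curtailment flexibility with the same budget K. -/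
/-- Theorem 3, first part: delay flexibility unlocks at most
the curtailment-flexibility capacity. With dynamic hosting capacities
`C t = Cres t / lhat t` sorted nondecreasingly by the permutation `σ`, if a
load modification `u` reduces load (`u t < 0`) in at most `K` slots (and may
be positive elsewhere, modeling rebound) and `c * lhat t + u t ≤ Cres t` holds
for all `t`, then `c ≤ C[K+1] = C (σ ⟨K, _⟩)`. In particular the hosting
capacity unlocked by delay flexibility with budget `K` (any window length `D`)
is at most the curtailment-flexibility capacity `C*_K = C[K+1]`. -/
theorem stmt_10 (T : ℕ) (hT : 1 ≤ T) (K : ℕ) (hK : K < T)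
    (lhat Cres : Fin T → ℝ)
    (hlhat : ∀ t, 0 < lhat t ∧ lhat t ≤ 1)
    (C : Fin T → ℝ) (hC : ∀ t, C t = Cres t / lhat t)
    (σ : Equiv.Perm (Fin T))
    (hσ : ∀ i j : Fin T, i ≤ j → C (σ i) ≤ C (σ j))
    (u : Fin T → ℝ)
    (hu : {t : Fin T | u t < 0}.ncard ≤ K)
    (c : ℝ)
    (hc : ∀ t, c * lhat t + u t ≤ Cres t) :
    c ≤ C (σ ⟨K, hK⟩) := by
  set S : Finset (Fin T) := (Finset.Iic ⟨K, hK⟩).image σ with hS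
  have hcard : S.card = K + 1 := by
    rw [hS, Finset.card_image_of_injective _ σ.injective, Fin.card_Iic]
  -- there is t ∈ S with u t ≥ 0
  have hex : ∃ t ∈ S, 0 ≤ u t := by
    by_contra h
    push_neg at h
    have hsub : (S : Set (Fin T)) ⊆ {t : Fin T | u t < 0} := by
      intro t ht
      exact h t ht
    have := Set.ncard_le_ncard hsub (Set.Finite.subset (Set.finite_univ) (Set.subset_univ _))
    rw [Set.ncard_coe_finset, hcard] at this
    omega
  obtain ⟨t, htS, htu⟩ := hex
  obtain ⟨i, hi, hit⟩ := Finset.mem_image.mp htS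
  have hl := (hlhat t).1
  have h1 : c * lhat t ≤ Cres t := by linarith [hc t]
  have h2 : c ≤ C t := by
    rw [hC t, le_div_iff₀ hl]
    exact h1
  calc c ≤ C t := h2
    _ = C (σ i) := by rw [hit]
    _ ≤ C (σ ⟨K, hK⟩) := hσ i ⟨K, hK⟩ (Finset.mem_Iic.mp hi)
end

section
/- Let T ≥ 1 and 1 ≤ K ≤ T be integers, let a : {1,...,T} → ℝ, and let t_1 < t_2 < ... < t_K be indices in {1,...,T} such that a(t) ≥ 0 for every t ∉ {t_1,...,t_K} and a(t_k) ≤ 0 for every k. Then the following are equivalent: (i) there exist functions w_1,...,w_K : {1,...,T} → ℝ such that for every k and τ: w_k(τ) ≥ 0; w_k(τ) = 0 whenever τ ≤ t_k or τ ∈ {t_1,...,t_K}; Σ_{τ=1}^{T} w_k(τ) = −a(t_k); and Σ_{k=1}^{K} w_k(τ) ≤ a(τ) for every τ ∉ {t_1,...,t_K}; (ii) for every k = 1,...,K, Σ_{τ=t_k}^{T} a(τ) ≥ 0. -/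
/-!
Necessity: the deficits of the interventions at or after `s` can only be re-served at
non-intervention times after `s`, so together they cannot exceed the surplus available there.

Sufficiency is by induction on the number of interventions. The deficit `d = -a L` of the last
intervention `L` is spread over the times after `L` in proportion to their surpluses, which is
possible since `d ≤ ∑_{τ > L} a τ`. Clearing the deficit at `L` and the used surplus after `L`
leaves every earlier suffix sum unchanged, as both changes happen inside that suffix and cancel.
-/

open Finset

variable {ι κ : Type*} [LinearOrder ι] [Fintype ι]

theorem exists_sum_eq_of_le_sum {α : Type*} [Fintype α] (A : Finset α) {f : α → ℝ}
    (hf : ∀ x ∈ A, 0 ≤ f x) {d : ℝ} (hd : 0 ≤ d) (hdf : d ≤ ∑ x ∈ A, f x) :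
    ∃ v : α → ℝ, (∀ x, 0 ≤ v x) ∧ (∀ x ∉ A, v x = 0) ∧ (∀ x ∈ A, v x ≤ f x) ∧ ∑ x, v x = d := by
  classical
  set S := ∑ x ∈ A, f x
  have hc : 0 ≤ d / S := div_nonneg hd (hd.trans hdf)
  have hc1 : d / S ≤ 1 := div_le_one_of_le₀ hdf (hd.trans hdf)
  refine ⟨fun x => if x ∈ A then d / S * f x else 0, fun x => ?_, fun x hx => if_neg hx,
    fun x hx => ?_, ?_⟩ <;> dsimp only
  · split_ifs with hx
    exacts [mul_nonneg hc (hf x hx), le_rfl]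
  · rw [if_pos hx]
    exact mul_le_of_le_one_left (hf x hx) hc1
  · rw [sum_ite_mem, univ_inter, ← mul_sum]
    rcases eq_or_ne S 0 with hS | hS
    · rw [hS, div_zero, zero_mul]
      exact ((hdf.trans hS.le).antisymm hd).symm
    · exact div_mul_cancel₀ d hS

theorem sum_Ici_update_sub [LocallyFiniteOrderTop ι] {a v : ι → ℝ} {L s : ι} (hs : s ≤ L)
    (hvL : ∀ τ ≤ L, v τ = 0) (hv : ∑ τ, v τ = -a L) :
    ∑ τ ∈ Ici s, (Function.update a L 0 - v) τ = ∑ τ ∈ Ici s, a τ := by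
  have hL : L ∈ Ici s := mem_Ici.2 hs
  have hvs : ∑ τ ∈ Ici s, v τ = ∑ τ, v τ :=
    sum_subset (subset_univ _) fun τ _ hτ => hvL τ ((not_le.1 (mt mem_Ici.2 hτ)).le.trans hs)
  simp only [Pi.sub_apply]
  rw [sum_sub_distrib, sum_update_of_mem hL, sum_eq_add_sum_sdiff_singleton_of_mem hL a, hvs, hv]
  ring

structure IsDelaySchedule [Fintype κ] (t : κ → ι) (a : ι → ℝ) (w : κ → ι → ℝ) : Prop where
  nonneg : ∀ k τ, 0 ≤ w k τ
  eq_zero_of_le : ∀ k τ, τ ≤ t k → w k τ = 0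
  eq_zero_of_mem_range : ∀ k τ, τ ∈ Set.range t → w k τ = 0
  sum_eq : ∀ k, ∑ τ, w k τ = -a (t k)
  sum_le : ∀ τ ∉ Set.range t, ∑ k, w k τ ≤ a τ

namespace IsDelaySchedule

variable [Fintype κ] {t : κ → ι} {a : ι → ℝ} {w : κ → ι → ℝ}

theorem eq_zero_of_nonpos (h : IsDelaySchedule t a w) {τ : ι} (hτ : τ ∉ Set.range t)
    (ha : a τ ≤ 0) (k : κ) : w k τ = 0 := by
  have hsum : ∑ k, w k τ = 0 :=
    le_antisymm ((h.sum_le τ hτ).trans ha) (sum_nonneg fun k _ => h.nonneg k τ)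
  exact (sum_eq_zero_iff_of_nonneg fun k _ => h.nonneg k τ).1 hsum k (mem_univ k)

theorem sum_Ici_nonneg [LocallyFiniteOrderTop ι] (h : IsDelaySchedule t a w)
    (ht : Function.Injective t) (s : ι) : 0 ≤ ∑ τ ∈ Ici s, a τ := by
  classical
  set J := univ.filter fun k => s ≤ t k
  have hJ : J.image t = (Ici s).filter (· ∈ Set.range t) := by
    ext τ
    simp only [J, mem_image, mem_filter, mem_univ, true_and, mem_Ici, Set.mem_range]
    constructor
    · rintro ⟨k, hk, rfl⟩
      exact ⟨hk, k, rfl⟩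
    · rintro ⟨hτ, k, rfl⟩
      exact ⟨k, hτ, rfl⟩
  have hpoint : ∀ τ, ∑ k ∈ J, w k τ + (if τ ∈ Set.range t then a τ else 0) ≤ a τ := by
    intro τ
    split_ifs with hτ
    · simp [h.eq_zero_of_mem_range _ τ hτ]
    · calc ∑ k ∈ J, w k τ + 0 ≤ ∑ k, w k τ := by
            rw [add_zero]
            exact sum_le_sum_of_subset_of_nonneg (subset_univ J) fun k _ _ => h.nonneg k τ
        _ ≤ a τ := h.sum_le τ hτ
  have hfull : ∀ k ∈ J, ∑ τ ∈ Ici s, w k τ = -a (t k) := by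
    intro k hk
    rw [← h.sum_eq k]
    refine sum_subset (subset_univ _) fun τ _ hτ => h.eq_zero_of_le k τ ?_
    simp only [J, mem_filter, mem_univ, true_and] at hk
    exact ((not_le.1 (mt mem_Ici.2 hτ)).trans_le hk).le
  calc 0 = ∑ k ∈ J, -a (t k) + ∑ k ∈ J, a (t k) := by simp
    _ = ∑ τ ∈ Ici s, (∑ k ∈ J, w k τ + if τ ∈ Set.range t then a τ else 0) := by
      rw [sum_add_distrib, sum_comm, sum_congr rfl hfull, ← sum_filter, ← hJ,
        sum_image ht.injOn]
    _ ≤ ∑ τ ∈ Ici s, a τ := sum_le_sum fun τ _ => hpoint τ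

theorem snoc {K : ℕ} {t : Fin K → ι} {w : Fin K → ι → ℝ} {L : ι} {v : ι → ℝ}
    (hL : ∀ k, t k < L) (hv0 : ∀ τ, 0 ≤ v τ) (hvL : ∀ τ ≤ L, v τ = 0) (hv : ∑ τ, v τ = -a L)
    (h : IsDelaySchedule t (Function.update a L 0 - v) w) :
    IsDelaySchedule (Fin.snoc t L : Fin (K + 1) → ι) a (Fin.snoc w v) := by
  have ha : ∀ τ ≠ L, (Function.update a L 0 - v) τ = a τ - v τ := fun τ hτ => by simp [hτ]
  have hwL : ∀ k, w k L = 0 :=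
    h.eq_zero_of_nonpos (by simpa using fun k => (hL k).ne) (by simp [hvL L le_rfl])
  refine ⟨?_, ?_, ?_, ?_, ?_⟩ <;>
    simp only [Fin.forall_fin_succ', Fin.snoc_castSucc, Fin.snoc_last, Fin.range_snoc,
      Fin.sum_univ_castSucc, Set.forall_mem_insert, Set.forall_mem_range]
  · exact ⟨h.nonneg, hv0⟩
  · exact ⟨h.eq_zero_of_le, hvL⟩
  · exact ⟨fun k => ⟨hwL k, fun i => h.eq_zero_of_mem_range k _ ⟨i, rfl⟩⟩, hvL L le_rfl,
      fun k => hvL _ (hL k).le⟩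
  · exact ⟨fun k => by rw [h.sum_eq k, ha _ (hL k).ne, hvL _ (hL k).le, sub_zero], hv⟩
  · intro τ hτ
    rw [Set.mem_insert_iff, not_or] at hτ
    have hcap := h.sum_le τ hτ.2
    rw [ha τ hτ.1] at hcap
    linarith

end IsDelaySchedule

theorem exists_isDelaySchedule [LocallyFiniteOrderTop ι] {K : ℕ} {t : Fin K → ι}
    (ht : StrictMono t) {a : ι → ℝ} (hpos : ∀ τ ∉ Set.range t, 0 ≤ a τ)
    (hneg : ∀ k, a (t k) ≤ 0) (hsuf : ∀ k, 0 ≤ ∑ τ ∈ Ici (t k), a τ) :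
    ∃ w, IsDelaySchedule t a w := by
  induction t using Fin.snocInduction generalizing a with
  | elim0 =>
    refine ⟨0, ⟨fun _ _ => le_rfl, fun _ _ _ => rfl, fun _ _ _ => rfl, fun k => k.elim0, ?_⟩⟩
    simpa using hpos
  | snoc t L ih =>
    have hL : ∀ k, t k < L := fun k => by simpa using ht (Fin.castSucc_lt_last k)
    have ht' : StrictMono t := fun i j hij => by
      simpa using ht (Fin.castSucc_lt_castSucc_iff.2 hij)
    have hd : 0 ≤ -a L := by simpa using hneg (Fin.last _)
    have hdS : -a L ≤ ∑ τ ∈ Ioi L, a τ := by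
      have := hsuf (Fin.last _)
      rw [Fin.snoc_last, ← Ioi_insert, sum_insert notMem_Ioi_self] at this
      linarith
    have hafter : ∀ τ ∈ Ioi L, 0 ≤ a τ := fun τ hτ => hpos τ <| by
      simp [(mem_Ioi.1 hτ).ne', fun k => ((hL k).trans (mem_Ioi.1 hτ)).ne]
    obtain ⟨v, hv0, hvL, hva, hv⟩ := exists_sum_eq_of_le_sum (Ioi L) hafter hd hdS
    have hvL' : ∀ τ ≤ L, v τ = 0 := fun τ hτ => hvL τ (by simpa using hτ)
    set a' := Function.update a L 0 - v
    have hpos' : ∀ τ ∉ Set.range t, 0 ≤ a' τ := by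
      intro τ hτ
      rcases lt_trichotomy τ L with hlt | rfl | hgt
      · simpa [a', hlt.ne, hvL' τ hlt.le] using hpos τ (by simp [hlt.ne, hτ])
      · simp [a', hvL' τ le_rfl]
      · simpa [a', hgt.ne'] using hva τ (mem_Ioi.2 hgt)
    have hneg' : ∀ k, a' (t k) ≤ 0 := fun k => by
      simpa [a', (hL k).ne, hvL' _ (hL k).le] using hneg k.castSucc
    have hsuf' : ∀ k, 0 ≤ ∑ τ ∈ Ici (t k), a' τ := fun k => by
      rw [sum_Ici_update_sub (hL k).le hvL' hv]
      simpa using hsuf k.castSucc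
    obtain ⟨w, hw⟩ := ih ht' hpos' hneg' hsuf'
    exact ⟨Fin.snoc w v, hw.snoc hL hv0 hvL' hv⟩

theorem stmt_11_general (T : ℕ) (K : ℕ)
    (a : Fin T → ℝ)
    (t : Fin K → Fin T) (hmono : StrictMono t)
    (hpos : ∀ τ : Fin T, (∀ k, t k ≠ τ) → 0 ≤ a τ)
    (hneg : ∀ k : Fin K, a (t k) ≤ 0) :
    (∃ w : Fin K → Fin T → ℝ,
      (∀ k τ, 0 ≤ w k τ) ∧
      (∀ k τ, τ ≤ t k → w k τ = 0) ∧
      (∀ k τ, (∃ k', t k' = τ) → w k τ = 0) ∧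
      (∀ k, ∑ τ, w k τ = -a (t k)) ∧
      (∀ τ : Fin T, (∀ k, t k ≠ τ) → ∑ k, w k τ ≤ a τ))
    ↔ (∀ k : Fin K, 0 ≤ ∑ τ ∈ Finset.Ici (t k), a τ) := by
  have hrange : ∀ τ, τ ∉ Set.range t ↔ ∀ k, t k ≠ τ := fun τ => by simp
  constructor
  · rintro ⟨w, hw0, hwle, hwmem, hwsum, hwcap⟩ k
    have hw : IsDelaySchedule t a w :=
      ⟨hw0, hwle, hwmem, hwsum, fun τ hτ => hwcap τ ((hrange τ).1 hτ)⟩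
    exact hw.sum_Ici_nonneg hmono.injective (t k)
  · intro hsuf
    obtain ⟨w, hw⟩ :=
      exists_isDelaySchedule hmono (fun τ hτ => hpos τ ((hrange τ).1 hτ)) hneg hsuf
    exact ⟨w, hw.nonneg, hw.eq_zero_of_le, hw.eq_zero_of_mem_range, hw.sum_eq,
      fun τ hτ => hw.sum_le τ ((hrange τ).2 hτ)⟩

/-- Theorem 3, second part: feasibility of re-serving the
curtailed load iff all suffix sums of surpluses are nonnegative.
Let `a : Fin T → ℝ` (the surplus `Cres t - C*_K * lhat t`), and let
`t 0 < t 1 < … < t (K-1)` be the intervention times, with `a τ ≥ 0` off the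
intervention times and `a (t k) ≤ 0` at them. Then the following are
equivalent:
(i) there exist `w k : Fin T → ℝ` (the re-served portions) with `w k τ ≥ 0`,
`w k τ = 0` for `τ ≤ t k` and at intervention times, `∑ τ, w k τ = -a (t k)`,
and `∑ k, w k τ ≤ a τ` off the intervention times;
(ii) `∑_{τ ≥ t k} a τ ≥ 0` for every `k`. -/
theorem stmt_11 (T : ℕ) (hT : 1 ≤ T) (K : ℕ) (hK1 : 1 ≤ K) (hKT : K ≤ T)
    (a : Fin T → ℝ)
    (t : Fin K → Fin T) (hmono : StrictMono t)
    (hpos : ∀ τ : Fin T, (∀ k, t k ≠ τ) → 0 ≤ a τ)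
    (hneg : ∀ k : Fin K, a (t k) ≤ 0) :
    (∃ w : Fin K → Fin T → ℝ,
      (∀ k τ, 0 ≤ w k τ) ∧
      (∀ k τ, τ ≤ t k → w k τ = 0) ∧
      (∀ k τ, (∃ k', t k' = τ) → w k τ = 0) ∧
      (∀ k, ∑ τ, w k τ = -a (t k)) ∧
      (∀ τ : Fin T, (∀ k, t k ≠ τ) → ∑ k, w k τ ≤ a τ))
    ↔ (∀ k : Fin K, 0 ≤ ∑ τ ∈ Finset.Ici (t k), a τ) :=
  stmt_11_general T K a t hmono hpos hneg
end

section
/- Let n ≥ 1 be an integer, i† ∈ {1,...,n}, and let R, X ∈ ℝ^{n×n}, η ∈ ℝ^n, and set Z = R + X·diag(η); assume Z_{ij} > 0 for all i, j. Let ℓ ∈ ℝ^n with ℓ ≥ 0 componentwise, s ≥ 0 a real number, v₀ ∈ ℝ, v̲, v̄ ∈ ℝ^n with v̄_i ≥ v₀ for all i, and p̄₀ ∈ ℝ. Define the injection p = −(ℓ + s·e_{i†}) ∈ ℝ^n, the reactive injection q = diag(η)·p, and the voltage vector v = v₀·1 + 2(R·p + X·q) ∈ ℝ^n. Then the constraints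 [Σ_{i=1}^n (ℓ_i + s·1{i = i†}) ≤ p̄₀ and v̲_i ≤ v_i ≤ v̄_i for all i] hold if and only if s ≤ min{ p̄₀ − Σ_{i=1}^n ℓ_i , min_{i=1,...,n} (v₀ − v̲_i − 2·(Z·ℓ)_i)/(2·Z_{i,i†}) }. -/
open Matrix

/-- Theorem 4, key step: the LinDistFlow network constraints
reduce to a scalar constraint on the new load. With sensitivity matrix
`Z = R + X·diag(η)` having positive entries, existing loads `ℓ ≥ 0`, new load
`s ≥ 0` at bus `i†`, injections `p = -(ℓ + s e_{i†})`, `q = diag(η) p`, and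
voltages `v = v₀ 1 + 2(R p + X q)`, the constraints
`∑ᵢ (ℓᵢ + s 1{i=i†}) ≤ p̄₀` and `v̲ᵢ ≤ vᵢ ≤ v̄ᵢ` (with `v̄ᵢ ≥ v₀`) hold iff
`s ≤ min{p̄₀ - ∑ᵢ ℓᵢ, minᵢ (v₀ - v̲ᵢ - 2 (Z ℓ)ᵢ)/(2 Z_{i,i†})}` (the dynamic
residual capacity of Definition 2). -/
theorem stmt_12 (n : ℕ) (hn : 0 < n) (idag : Fin n)
    (R X : Matrix (Fin n) (Fin n) ℝ) (η : Fin n → ℝ)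
    (Z : Matrix (Fin n) (Fin n) ℝ) (hZdef : Z = R + X * Matrix.diagonal η)
    (hZpos : ∀ i j, 0 < Z i j)
    (ℓ : Fin n → ℝ) (hℓ : ∀ i, 0 ≤ ℓ i) (s : ℝ) (hs : 0 ≤ s)
    (v0 : ℝ) (vlo vhi : Fin n → ℝ) (hvhi : ∀ i, v0 ≤ vhi i) (p0bar : ℝ)
    (p q v : Fin n → ℝ)
    (hp : ∀ i, p i = -(ℓ i + if i = idag then s else 0))
    (hq : ∀ i, q i = η i * p i)
    (hv : ∀ i, v i = v0 + 2 * (R.mulVec p i + X.mulVec q i)) :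
    ((∑ i, (ℓ i + if i = idag then s else 0)) ≤ p0bar ∧
      ∀ i, vlo i ≤ v i ∧ v i ≤ vhi i)
    ↔ s ≤ min (p0bar - ∑ i, ℓ i)
        (Finset.univ.inf'
          (Finset.univ_nonempty_iff.mpr ⟨⟨0, hn⟩⟩)
          (fun i => (v0 - vlo i - 2 * Z.mulVec ℓ i) / (2 * Z i idag))) := by

  have hZentry : ∀ i j, Z i j = R i j + X i j * η j := by
    intro i j
    simp [hZdef, Matrix.mul_diagonal]
  have hv' : ∀ i, v i = v0 - 2 * Z.mulVec ℓ i - 2 * s * Z i idag := by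
    intro i
    rw [hv]
    have h1 : R.mulVec p i + X.mulVec q i = -(Z.mulVec ℓ i) - s * Z i idag := by
      simp only [Matrix.mulVec, dotProduct]
      rw [← Finset.sum_add_distrib, ← Finset.sum_neg_distrib]
      rw [show (∑ j, -(Z i j * ℓ j)) - s * Z i idag
          = ∑ j, (-(Z i j * ℓ j) - (if j = idag then s * Z i j else 0)) by
        rw [Finset.sum_sub_distrib, Finset.sum_ite_eq' Finset.univ idag
          (fun j => s * Z i j)]
        simp]
      apply Finset.sum_congr rfl
      intro j _
      rw [hq, hp, hZentry]
      by_cases hj : j = idag <;> simp [hj] <;> ring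
    rw [h1]; ring
  have hsum : (∑ i, (ℓ i + if i = idag then s else 0)) = (∑ i, ℓ i) + s := by
    rw [Finset.sum_add_distrib, Finset.sum_ite_eq' Finset.univ idag (fun _ => s)]
    simp
  have hZl : ∀ i, 0 ≤ Z.mulVec ℓ i := by
    intro i
    unfold Matrix.mulVec dotProduct
    apply Finset.sum_nonneg
    intro j _
    exact mul_nonneg (hZpos i j).le (hℓ j)
  constructor
  · rintro ⟨h0, hvc⟩
    rw [le_min_iff]
    constructor
    · rw [hsum] at h0; linarith
    · rw [Finset.le_inf'_iff]
      intro i _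
      rw [le_div_iff₀ (mul_pos two_pos (hZpos _ idag))]
      have := (hvc i).1
      rw [hv' i] at this
      linarith
  · intro hle
    rw [le_min_iff, Finset.le_inf'_iff] at hle
    obtain ⟨h1, h2⟩ := hle
    refine ⟨by rw [hsum]; linarith, fun i => ?_⟩
    have hi := h2 i (Finset.mem_univ i)
    rw [le_div_iff₀ (mul_pos two_pos (hZpos _ idag))] at hi
    constructor
    · rw [hv' i]; linarith
    · rw [hv' i]
      have h3 := mul_nonneg hs (hZpos i idag).le
      have h4 := hvhi i
      have h5 := hZl i
      linarith
end
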